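/- Define κ̄ = (-9 - 5√5 + √(190 + 90√5))/4. Then κ̄ ∈ (-1, 0) (numerically κ̄ ≈ -0.1001), and κ̄ is the unique κ ∈ (-1,0) for which the polynomial P_κ(h) = -κ(1+κ)h³ + [3κ + (1+κ)²]h² - 4(1+κ)h + 4 vanishes at h = h̄(κ) := 3/(1+κ+√(1-κ+κ²)); for κ < κ̄ we have P_κ(h̄(κ)) < 0 (the unconstrained maximizer lies inside [1, h̄(κ)]), while for κ̄ < κ ≤ 0, P_κ(h̄(κ)) > 0. -/
import Mathlib


noncomputable def hbar (κ : ℝ) : ℝ := 3 / (1 + κ + Real.sqrt (1 - κ + κ ^ 2))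

noncomputable def Ppoly (κ h : ℝ) : ℝ :=
  -κ * (1 + κ) * h ^ 3 + (3 * κ + (1 + κ) ^ 2) * h ^ 2 - 4 * (1 + κ) * h + 4

noncomputable def κbar : ℝ :=
  (-9 - 5 * Real.sqrt 5 + Real.sqrt (190 + 90 * Real.sqrt 5)) / 4

lemma disc_pos (κ : ℝ) : 0 < 1 - κ + κ ^ 2 := by nlinarith [sq_nonneg (2*κ - 1), sq_nonneg κ]

lemma s_sq (κ : ℝ) : (Real.sqrt (1 - κ + κ ^ 2)) ^ 2 = 1 - κ + κ ^ 2 :=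
  Real.sq_sqrt (disc_pos κ).le

lemma s_pos (κ : ℝ) : 0 < Real.sqrt (1 - κ + κ ^ 2) := Real.sqrt_pos.mpr (disc_pos κ)

lemma denom_pos (κ : ℝ) : 0 < 1 + κ + Real.sqrt (1 - κ + κ ^ 2) := by
  have hs2 := s_sq κ
  have hs0 := s_pos κ
  by_contra h
  push_neg at h
  nlinarith [hs0, hs2]

lemma Pval (κ : ℝ) :
    Ppoly κ (hbar κ) = -((1+κ) * hbar κ) ^ 2 + 5 * ((1+κ) * hbar κ) - 5 := by
  have hd := (denom_pos κ).ne'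
  have hs2 := s_sq κ
  set s := Real.sqrt (1 - κ + κ ^ 2) with hsdef
  set h := hbar κ with hh
  have hdh : (1 + κ + s) * h = 3 := by
    rw [hh]; unfold hbar; rw [← hsdef]; field_simp
  unfold Ppoly
  linear_combination ((3 - (1+κ)*h)/3) * (((1+κ-s)*h - 3) * hdh + h^2 * hs2)

lemma a_facts : (Real.sqrt 5) ^ 2 = 5 ∧ 2 < Real.sqrt 5 ∧ Real.sqrt 5 < 3 := by
  have h : (Real.sqrt 5) ^ 2 = 5 := Real.sq_sqrt (by norm_num)
  have h0 : 0 ≤ Real.sqrt 5 := Real.sqrt_nonneg 5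
  refine ⟨h, by nlinarith, by nlinarith⟩

lemma t_facts : (Real.sqrt (190 + 90 * Real.sqrt 5)) ^ 2 = 190 + 90 * Real.sqrt 5 := by
  have := a_facts
  exact Real.sq_sqrt (by nlinarith [this.2.1])

lemma kbar_mem : κbar ∈ Set.Ioo (-1 : ℝ) 0 := by
  obtain ⟨ha2, ha1, ha3⟩ := a_facts
  have ht2 := t_facts
  have ht0 : 0 ≤ Real.sqrt (190 + 90 * Real.sqrt 5) := Real.sqrt_nonneg _
  constructor
  · unfold κbar; nlinarith [ht2, ha2, ht0, ha1]
  · unfold κbar; nlinarith [ht2, ha2, ht0, ha1]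

lemma Q2_kbar : (6 * Real.sqrt 5 - 12) * κbar ^ 2 + (21 - 3 * Real.sqrt 5) * κbar
    + (6 * Real.sqrt 5 - 12) = 0 := by
  obtain ⟨ha2, _, _⟩ := a_facts
  have ht2 := t_facts
  set a := Real.sqrt 5
  set t := Real.sqrt (190 + 90 * a)
  show (6*a-12) * ((-9 - 5*a + t)/4) ^ 2 + (21 - 3*a) * ((-9 - 5*a + t)/4) + (6*a-12) = 0
  linear_combination (3*a/8 - 3/4) * ht2 + (75*a/8 + 105/2 - 15*t/4) * ha2

set_option maxHeartbeats 1000000 in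
/-- Master sign lemma for `κ > -1`. -/
lemma master (κ : ℝ) (h1 : -1 < κ) :
    (Ppoly κ (hbar κ) = 0 ↔ κ = κbar) ∧ (κ < κbar → Ppoly κ (hbar κ) < 0) ∧
    (κbar < κ → 0 < Ppoly κ (hbar κ)) := by
  obtain ⟨ha2, ha1, ha3⟩ := a_facts
  have hQbar := Q2_kbar
  obtain ⟨hkb1, hkb0⟩ := kbar_mem
  have hs2 := s_sq κ
  have hs0 := s_pos κ
  have hd := denom_pos κ
  have hP := Pval κ
  set a := Real.sqrt 5 with hadef
  set s := Real.sqrt (1 - κ + κ ^ 2) with hsdef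
  set u := (1+κ) * hbar κ with hu
  -- u * d = 3 (1+κ)
  have hud : u * (1 + κ + s) = 3 * (1 + κ) := by
    rw [hu]; unfold hbar; rw [← hsdef]; field_simp
  have hu3 : u < 3 := by nlinarith [hud, hs0, hd, h1]
  -- factorization of P
  have hPfac : Ppoly κ (hbar κ) = (u - (5-a)/2) * ((5+a)/2 - u) := by
    rw [hP]; linear_combination (-1/4 : ℝ) * ha2
  have huc' : u < (5+a)/2 := by linarith
  -- bridge : A^2 - B^2 = Q2 / 2
  have hbridge : ((1+a)/2 * (1+κ)) ^ 2 - ((5-a)/2 * s) ^ 2 =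
      ((6*a-12) * κ^2 + (21-3*a) * κ + (6*a-12)) / 2 := by
    linear_combination (((1+κ)^2 - s^2)/4) * ha2 + (-(30 - 10*a)/4) * hs2
  -- (u - c) * d = A - B
  have hucd : (u - (5-a)/2) * (1 + κ + s) = (1+a)/2 * (1+κ) - (5-a)/2 * s := by
    linear_combination hud
  have hA : 0 < (1+a)/2 * (1+κ) := by nlinarith
  have hB : 0 < (5-a)/2 * s := by nlinarith
  -- factor of Q2
  have hQfac : (6*a-12) * κ^2 + (21-3*a) * κ + (6*a-12) =
      (κ - κbar) * ((6*a-12) * (κ + κbar) + (21 - 3*a)) := by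
    linear_combination hQbar
  have hF : 0 < (6*a-12) * (κ + κbar) + (21 - 3*a) := by
    nlinarith [mul_pos (show (0:ℝ) < 6*a-12 by linarith) (show (0:ℝ) < κ + κbar + 2 by linarith)]
  refine ⟨⟨fun hP0 => ?_, fun hk => ?_⟩, fun hk => ?_, fun hk => ?_⟩
  · -- P = 0 → κ = κbar
    have huc : u = (5-a)/2 := by
      rw [hPfac] at hP0
      rcases mul_eq_zero.mp hP0 with h | h
      · linarith
      · linarith
    have hAB : (1+a)/2 * (1+κ) = (5-a)/2 * s := by
      have := hucd; rw [huc] at this; linarith [this]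
    have hsq : ((1+a)/2 * (1+κ)) ^ 2 = ((5-a)/2 * s) ^ 2 := by rw [hAB]
    have hQ0 : (κ - κbar) * ((6*a-12) * (κ + κbar) + (21 - 3*a)) = 0 := by
      rw [← hQfac]; linarith [hbridge, hsq]
    rcases mul_eq_zero.mp hQ0 with h | h
    · linarith
    · linarith
  · -- κ = κbar → P = 0
    have hQ0 : (6*a-12) * κ^2 + (21-3*a) * κ + (6*a-12) = 0 := by
      rw [hk]; exact hQbar
    have hAB2 : ((1+a)/2 * (1+κ)) ^ 2 = ((5-a)/2 * s) ^ 2 := by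
      rw [hQ0] at hbridge; linarith
    have hAB : (1+a)/2 * (1+κ) = (5-a)/2 * s := by
      have hz : ((1+a)/2 * (1+κ) - (5-a)/2 * s) * ((1+a)/2 * (1+κ) + (5-a)/2 * s) = 0 := by
        linear_combination hAB2
      rcases mul_eq_zero.mp hz with h | h
      · linarith
      · linarith
    have huc : u = (5-a)/2 := by
      have h0 : (u - (5-a)/2) * (1 + κ + s) = 0 := by rw [hucd]; linarith
      rcases mul_eq_zero.mp h0 with h | h
      · linarith
      · linarith
    rw [hPfac, huc]; ring
  · -- κ < κbar → P < 0
    have hQneg : (6*a-12) * κ^2 + (21-3*a) * κ + (6*a-12) < 0 := by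
      rw [hQfac]
      exact mul_neg_of_neg_of_pos (by linarith) hF
    have hsqlt : ((1+a)/2 * (1+κ)) ^ 2 < ((5-a)/2 * s) ^ 2 := by linarith [hbridge, hQneg]
    have hAB : (1+a)/2 * (1+κ) < (5-a)/2 * s := lt_of_pow_lt_pow_left₀ 2 hB.le hsqlt
    have huc : u < (5-a)/2 := by
      by_contra hcon
      push_neg at hcon
      have h6 := mul_nonneg (sub_nonneg.mpr hcon) hd.le
      rw [hucd] at h6
      linarith
    rw [hPfac]
    exact mul_neg_of_neg_of_pos (by linarith) (by linarith)
  · -- κbar < κ → P > 0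
    have hQpos : 0 < (6*a-12) * κ^2 + (21-3*a) * κ + (6*a-12) := by
      rw [hQfac]
      exact mul_pos (by linarith) hF
    have hsqlt : ((5-a)/2 * s) ^ 2 < ((1+a)/2 * (1+κ)) ^ 2 := by linarith [hbridge, hQpos]
    have hAB : (5-a)/2 * s < (1+a)/2 * (1+κ) := lt_of_pow_lt_pow_left₀ 2 hA.le hsqlt
    have huc : (5-a)/2 < u := by
      by_contra hcon
      push_neg at hcon
      have h6 := mul_nonpos_of_nonpos_of_nonneg (by linarith : u - (5-a)/2 ≤ 0) hd.le
      rw [hucd] at h6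
      linarith
    rw [hPfac]
    exact mul_pos (by linarith) (by linarith)

theorem stmt_18 :
    κbar ∈ Set.Ioo (-1 : ℝ) 0 ∧
    (∀ κ ∈ Set.Ioo (-1 : ℝ) 0, Ppoly κ (hbar κ) = 0 ↔ κ = κbar) ∧
    (∀ κ : ℝ, κ < κbar → Ppoly κ (hbar κ) < 0) ∧
    (∀ κ : ℝ, κbar < κ → κ ≤ 0 → 0 < Ppoly κ (hbar κ)) := by
  refine ⟨kbar_mem, fun κ hκ => (master κ hκ.1).1, fun κ hk => ?_, fun κ hk hk0 => ?_⟩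
  · rcases le_or_gt κ (-1) with h | h
    · -- κ ≤ -1 : u ≤ 0, so P < 0
      have hP := Pval κ
      have hd := denom_pos κ
      have hb : 0 < hbar κ := by unfold hbar; positivity
      have hu0 : (1+κ) * hbar κ ≤ 0 :=
        mul_nonpos_of_nonpos_of_nonneg (by linarith) hb.le
      nlinarith [sq_nonneg ((1+κ) * hbar κ), hP, hu0]
    · exact (master κ h).2.1 hk
  · have h1 : -1 < κ := lt_trans kbar_mem.1 hk
    exact (master κ h1).2.2 hk
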